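/- Let U = T(x_1, x_2, …) be the free unital associative ℤ-algebra on countably many generators. For each (l; k_1,…,k_n)-tree T there exist Hochschild cochains f^T_i ∈ C^{k_i}(U;U), 1 ≤ i ≤ n, and a monomial h^T ∈ U such that for any (l; k_1,…,k_n)-tree S, the coefficient of h^T in O_S(f^T_1,…,f^T_n)(x_1,…,x_l) equals 1 if S = T and 0 otherwise. -/

import Mathlib

/-- A planar rooted tree with legs labeled by natural numbers, `white`
vertices labeled by natural numbers, `black` vertices, and `special`
(arity 0) vertices.  The children lists record the planar structure. -/
inductive RTree : Type
  | leg : ℕ → RTree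
  | special : RTree
  | white : ℕ → List RTree → RTree
  | black : List RTree → RTree

mutual
  /-- Number of occurrences of the white label `i`. -/
  def whiteCount (i : ℕ) : RTree → ℕ
    | .leg _ => 0
    | .special => 0
    | .white j ts => (if j = i then 1 else 0) + whiteCountL i ts
    | .black ts => whiteCountL i ts
  def whiteCountL (i : ℕ) : List RTree → ℕ
    | [] => 0
    | t :: ts => whiteCount i t + whiteCountL i ts
end

mutual
  /-- Number of occurrences of the leg label `j`. -/
  def legCount (j : ℕ) : RTree → ℕ
    | .leg j' => if j' = j then 1 else 0
    | .special => 0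
    | .white _ ts => legCountL j ts
    | .black ts => legCountL j ts
  def legCountL (j : ℕ) : List RTree → ℕ
    | [] => 0
    | t :: ts => legCount j t + legCountL j ts
end

/-- A tree whose root is neither a black vertex nor a special vertex. -/
def RTree.notBlackOrSpecial : RTree → Prop
  | .black _ => False
  | .special => False
  | _ => True

mutual
  /-- Local well-formedness: white vertices have label `< n` and the arity
  prescribed by `k`; black vertices have arity `≥ 2` and no child which is a
  black or a special vertex (no edge connects two black vertices or a black
  vertex with a special vertex). -/
  def IsWF (n : ℕ) (k : ℕ → ℕ) : RTree → Prop
    | .leg _ => True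
    | .special => True
    | .white j ts => j < n ∧ ts.length = k j ∧ IsWFL n k ts
    | .black ts => 2 ≤ ts.length ∧ (∀ t ∈ ts, t.notBlackOrSpecial) ∧ IsWFL n k ts
  def IsWFL (n : ℕ) (k : ℕ → ℕ) : List RTree → Prop
    | [] => True
    | t :: ts => IsWF n k t ∧ IsWFL n k ts
end

/-- An `(l; k 0, …, k (n-1))`-tree: a well-formed planar tree whose white
vertices are labeled bijectively by `{0,…,n-1}` (with arities given by `k`)
and whose legs are labeled bijectively by `{0,…,l-1}`. -/
def IsTree (n l : ℕ) (k : ℕ → ℕ) (T : RTree) : Prop :=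
  IsWF n k T
    ∧ (∀ i : ℕ, whiteCount i T = if i < n then 1 else 0)
    ∧ (∀ j : ℕ, legCount j T = if j < l then 1 else 0)

mutual
  /-- Evaluation of the natural operation `O_T(f_1,…,f_n)(a_0,…,a_{l-1})`
  determined by a tree: the `i`-th white vertex is decorated by the Hochschild
  cochain `f i`, black vertices by the iterated multiplication, special
  vertices by the unit `1`, legs by the inputs `a`, and one composes along the
  tree. -/
  noncomputable def evalT (k : ℕ → ℕ)
      (f : ∀ i : ℕ, MultilinearMap ℤ (fun _ : Fin (k i) => FreeAlgebra ℤ ℕ) (FreeAlgebra ℤ ℕ))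
      (a : ℕ → FreeAlgebra ℤ ℕ) : RTree → FreeAlgebra ℤ ℕ
    | .leg j => a j
    | .special => 1
    | .white i ts => f i (fun s => (evalL k f a ts).getD s.val 1)
    | .black ts => (evalL k f a ts).prod
  noncomputable def evalL (k : ℕ → ℕ)
      (f : ∀ i : ℕ, MultilinearMap ℤ (fun _ : Fin (k i) => FreeAlgebra ℤ ℕ) (FreeAlgebra ℤ ℕ))
      (a : ℕ → FreeAlgebra ℤ ℕ) : List RTree → List (FreeAlgebra ℤ ℕ)
    | [] => []
    | t :: ts => evalT k f a t :: evalL k f a ts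
end

/-!
Take `f_i(a_1, …, a_k) = o_i a_1 c_i a_2 c_i ⋯ a_k c_i` with fresh letters `o_i`, `c_i`. Then
`O_S(f)(x_1, …, x_l)` is a single monomial, the word of `S`, and this word determines `S`: below
a white vertex `i` the letter `c_i` occurs exactly once after each child, since the label `i`
occurs nowhere else, and a black vertex contributes the concatenation of the words of its
children, which are legs or white vertices and whose words therefore form a prefix code.
So `h^T` is the word of `T`.
-/

theorem FreeAlgebra.basisFreeMonoid_apply {R X : Type*} [CommSemiring R] (m : FreeMonoid X) :
    basisFreeMonoid R X m = FreeMonoid.lift (ι R) m := by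
  simp [basisFreeMonoid, equivMonoidAlgebraFreeMonoid]

theorem FreeAlgebra.basisFreeMonoid_repr_prod_map_ι {R X : Type*} [CommSemiring R] (w : List X) :
    (basisFreeMonoid R X).repr (w.map (ι R)).prod = Finsupp.single (FreeMonoid.ofList w) 1 := by
  rw [← FreeMonoid.lift_ofList, ← basisFreeMonoid_apply, Module.Basis.repr_self]

namespace List

variable {α β : Type*}

theorem eq_of_map_eq_map_of_injOn {f : α → β} {l l' : List α}
    (hf : ∀ a ∈ l, ∀ b ∈ l', f a = f b → a = b) (h : l.map f = l'.map f) : l = l' := by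
  induction l generalizing l' with
  | nil => exact (map_eq_nil_iff.1 h.symm).symm
  | cons a l ih =>
    obtain ⟨b, l', rfl, hab, h⟩ := map_eq_cons_iff.1 h.symm
    rw [hf a mem_cons_self b mem_cons_self hab.symm,
      ih (fun a ha b hb => hf a (mem_cons_of_mem _ ha) b (mem_cons_of_mem _ hb)) h.symm]

theorem append_cons_inj_of_notMem_left {x : α} {u u' r r' : List α} (hu : x ∉ u) (hu' : x ∉ u')
    (h : u ++ x :: r = u' ++ x :: r') : u = u' ∧ r = r' := by
  induction u generalizing u' with
  | nil =>
    cases u' with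
    | nil => exact ⟨rfl, (cons_inj_right x).1 h⟩
    | cons b u' => exact absurd ((cons_eq_cons.1 h).1 ▸ mem_cons_self) hu'
  | cons a u ih =>
    cases u' with
    | nil => exact absurd ((cons_eq_cons.1 h).1 ▸ mem_cons_self) hu
    | cons b u' =>
      obtain ⟨rfl, htail⟩ := cons_eq_cons.1 h
      obtain ⟨rfl, rfl⟩ := ih (mt (mem_cons_of_mem a) hu) (mt (mem_cons_of_mem a) hu') htail
      exact ⟨rfl, rfl⟩

theorem flatMap_append_singleton_append_inj {x : α} {ws ws' : List (List α)} {r r' : List α}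
    (hlen : ws.length = ws'.length) (hx : ∀ w ∈ ws, x ∉ w) (hx' : ∀ w ∈ ws', x ∉ w)
    (h : ws.flatMap (· ++ [x]) ++ r = ws'.flatMap (· ++ [x]) ++ r') : ws = ws' ∧ r = r' := by
  induction ws generalizing ws' with
  | nil =>
    cases ws' with
    | nil => simpa using h
    | cons => simp at hlen
  | cons w ws ih =>
    cases ws' with
    | nil => simp at hlen
    | cons w' ws' =>
      simp only [flatMap_cons, append_assoc, singleton_append] at h
      obtain ⟨rfl, htail⟩ := append_cons_inj_of_notMem_left (hx w mem_cons_self)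
        (hx' w' mem_cons_self) h
      obtain ⟨rfl, rfl⟩ := ih (by simpa using hlen) (fun v hv => hx v (mem_cons_of_mem _ hv))
        (fun v hv => hx' v (mem_cons_of_mem _ hv)) htail
      exact ⟨rfl, rfl⟩

theorem eq_of_flatten_eq_of_prefix {L L' : List (List α)} (hL : ∀ u ∈ L, u ≠ [])
    (hL' : ∀ u ∈ L', u ≠ []) (hpre : ∀ u ∈ L, ∀ u' ∈ L', ∀ r r', u ++ r = u' ++ r' → u = u')
    (h : L.flatten = L'.flatten) : L = L' := by
  induction L generalizing L' with
  | nil =>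
    cases L' with
    | nil => rfl
    | cons u' L' =>
      exact absurd (flatten_eq_nil_iff.1 h.symm u' mem_cons_self) (hL' u' mem_cons_self)
  | cons u L ih =>
    cases L' with
    | nil => exact absurd (flatten_eq_nil_iff.1 h u mem_cons_self) (hL u mem_cons_self)
    | cons u' L' =>
      rw [flatten_cons, flatten_cons] at h
      obtain rfl := hpre u mem_cons_self u' mem_cons_self _ _ h
      rw [ih (fun v hv => hL v (mem_cons_of_mem _ hv)) (fun v hv => hL' v (mem_cons_of_mem _ hv))
        (fun v hv v' hv' => hpre v (mem_cons_of_mem _ hv) v' (mem_cons_of_mem _ hv'))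
        (append_cancel_left h)]

theorem ofFn_getD_eq_map {m : ℕ} (L : List α) (hL : L.length = m) (d : α) (f : α → β) :
    ofFn (fun s : Fin m => f (L.getD s d)) = L.map f := by
  subst hL
  simp only [getD_eq_getElem _ _ (Fin.is_lt _)]
  exact ofFn_getElem_eq_map L f

end List

section Counts

variable {n l : ℕ} {k : ℕ → ℕ}

theorem whiteCountL_eq_sum (i : ℕ) (ts : List RTree) :
    whiteCountL i ts = (ts.map (whiteCount i)).sum := by
  induction ts with
  | nil => rfl
  | cons t ts ih => rw [whiteCountL, ih, List.map_cons, List.sum_cons]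

theorem legCountL_eq_sum (j : ℕ) (ts : List RTree) :
    legCountL j ts = (ts.map (legCount j)).sum := by
  induction ts with
  | nil => rfl
  | cons t ts ih => rw [legCountL, ih, List.map_cons, List.sum_cons]

theorem isWFL_iff (ts : List RTree) : IsWFL n k ts ↔ ∀ t ∈ ts, IsWF n k t := by
  induction ts with
  | nil => simp [IsWFL]
  | cons t ts ih => simp [IsWFL, ih]

theorem evalL_eq_map
    (f : ∀ i : ℕ, MultilinearMap ℤ (fun _ : Fin (k i) => FreeAlgebra ℤ ℕ) (FreeAlgebra ℤ ℕ))
    (a : ℕ → FreeAlgebra ℤ ℕ) (ts : List RTree) : evalL k f a ts = ts.map (evalT k f a) := by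
  induction ts with
  | nil => rfl
  | cons t ts ih => rw [evalL, ih, List.map_cons]

theorem whiteCount_le_of_mem {i : ℕ} {t : RTree} {ts : List RTree} (h : t ∈ ts) :
    whiteCount i t ≤ whiteCountL i ts := by
  rw [whiteCountL_eq_sum]
  exact List.le_sum_of_mem (List.mem_map_of_mem h)

theorem legCount_le_of_mem {j : ℕ} {t : RTree} {ts : List RTree} (h : t ∈ ts) :
    legCount j t ≤ legCountL j ts := by
  rw [legCountL_eq_sum]
  exact List.le_sum_of_mem (List.mem_map_of_mem h)

theorem whiteCount_le_white {i j : ℕ} {t : RTree} {ts : List RTree} (h : t ∈ ts) :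
    whiteCount i t ≤ whiteCount i (.white j ts) :=
  (whiteCount_le_of_mem h).trans (Nat.le_add_left _ _)

theorem whiteCount_le_black {i : ℕ} {t : RTree} {ts : List RTree} (h : t ∈ ts) :
    whiteCount i t ≤ whiteCount i (.black ts) :=
  whiteCount_le_of_mem h

theorem legCount_le_white {i j : ℕ} {t : RTree} {ts : List RTree} (h : t ∈ ts) :
    legCount j t ≤ legCount j (.white i ts) :=
  legCount_le_of_mem h

theorem legCount_le_black {j : ℕ} {t : RTree} {ts : List RTree} (h : t ∈ ts) :
    legCount j t ≤ legCount j (.black ts) :=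
  legCount_le_of_mem h

end Counts

namespace RTree

@[elab_as_elim]
theorem induction_mem {P : RTree → Prop} (leg : ∀ j, P (.leg j)) (special : P .special)
    (white : ∀ i ts, (∀ t ∈ ts, P t) → P (.white i ts))
    (black : ∀ ts, (∀ t ∈ ts, P t) → P (.black ts)) (S : RTree) : P S :=
  RTree.rec (motive_2 := fun ts => ∀ t ∈ ts, P t) leg special white black
    (fun _ h => absurd h List.not_mem_nil)
    (fun _ _ ht hts _ h => (List.mem_cons.1 h).elim (· ▸ ht) (hts _)) S

def WellLabeled (l : ℕ) (S : RTree) : Prop :=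
  (∀ i, whiteCount i S ≤ 1) ∧ ∀ j, legCount j S ≠ 0 → j < l

variable {n l : ℕ} {k : ℕ → ℕ}

theorem _root_.IsTree.wellLabeled {S : RTree} (h : IsTree n l k S) : S.WellLabeled l :=
  ⟨fun i => by rw [h.2.1 i]; split <;> omega,
    fun j hj => by_contra fun hjl => hj (by simp [h.2.2 j, hjl])⟩

theorem WellLabeled.mono {S T : RTree} (hS : S.WellLabeled l)
    (hw : ∀ i, whiteCount i T ≤ whiteCount i S) (hl : ∀ j, legCount j T ≤ legCount j S) :
    T.WellLabeled l :=
  ⟨fun i => (hw i).trans (hS.1 i), fun j hj => hS.2 j (by have := hl j; omega)⟩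

theorem WellLabeled.of_mem_white {i : ℕ} {ts : List RTree} {t : RTree}
    (h : (white i ts).WellLabeled l) (ht : t ∈ ts) : t.WellLabeled l ∧ whiteCount i t = 0 := by
  refine ⟨h.mono (fun _ => whiteCount_le_white ht) (fun _ => legCount_le_white ht), ?_⟩
  have hi := h.1 i
  have hle := whiteCount_le_of_mem (i := i) ht
  rw [whiteCount, if_pos rfl] at hi
  omega

theorem WellLabeled.of_mem_black {ts : List RTree} {t : RTree}
    (h : (black ts).WellLabeled l) (ht : t ∈ ts) : t.WellLabeled l :=
  h.mono (fun _ => whiteCount_le_black ht) (fun _ => legCount_le_black ht)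

def opener (l i : ℕ) : ℕ := l + 2 * i

def closer (l i : ℕ) : ℕ := l + 2 * i + 1

/-- The monomial `O_S(f)(x_0, …, x_{l-1})` for `f = separatingCochain l k`. -/
def word (l : ℕ) : RTree → List ℕ
  | .leg j => [j]
  | .special => []
  | .white i ts => opener l i :: (ts.map (word l)).flatMap (· ++ [closer l i])
  | .black ts => (ts.map (word l)).flatten

theorem mem_word {x : ℕ} {S : RTree} (hx : x ∈ S.word l) :
    legCount x S ≠ 0 ∨ ∃ i, whiteCount i S ≠ 0 ∧ (x = opener l i ∨ x = closer l i) := by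
  induction S using induction_mem with
  | leg j => simp_all [word, legCount]
  | special => simp [word] at hx
  | white i ts ih =>
    simp only [word, List.mem_cons, List.mem_flatMap, List.mem_map, List.mem_append,
      List.not_mem_nil, or_false] at hx
    rcases hx with rfl | ⟨_, ⟨t, ht, rfl⟩, hx | rfl⟩
    · exact .inr ⟨i, by simp [whiteCount], .inl rfl⟩
    · rcases ih t ht hx with h | ⟨i', hi', hx⟩
      · exact .inl (by have := legCount_le_white (i := i) ht (j := x); omega)
      · exact .inr ⟨i', by have := whiteCount_le_white (j := i) ht (i := i'); omega, hx⟩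
    · exact .inr ⟨i, by simp [whiteCount], .inr rfl⟩
  | black ts ih =>
    simp only [word, List.mem_flatten, List.mem_map] at hx
    obtain ⟨_, ⟨t, ht, rfl⟩, hx⟩ := hx
    rcases ih t ht hx with h | ⟨i', hi', hx⟩
    · exact .inl (by have := legCount_le_black (j := x) ht; omega)
    · exact .inr ⟨i', by have := whiteCount_le_black (i := i') ht; omega, hx⟩

theorem closer_notMem_word {i : ℕ} {t : RTree} (ht : t.WellLabeled l) (hi : whiteCount i t = 0) :
    closer l i ∉ t.word l := by
  intro hx
  rcases mem_word hx with h | ⟨i', hi', h | h⟩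
  · exact absurd (ht.2 _ h) (by simp only [closer]; omega)
  · simp only [opener, closer] at h; omega
  · obtain rfl : i' = i := by simp only [closer] at h; omega
    exact hi' hi

theorem word_ne_nil {t : RTree} (ht : t.notBlackOrSpecial) : t.word l ≠ [] := by
  cases t <;> simp_all [word, notBlackOrSpecial]

theorem white_word_append_inj {i i' : ℕ} {us us' : List RTree} {r r' : List ℕ}
    (hwf : IsWF n k (white i us)) (hwf' : IsWF n k (white i' us'))
    (hl : (white i us).WellLabeled l) (hl' : (white i' us').WellLabeled l)
    (h : (white i us).word l ++ r = (white i' us').word l ++ r') :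
    i = i' ∧ us.map (word l) = us'.map (word l) ∧ r = r' := by
  simp only [word, List.cons_append, List.cons.injEq] at h
  obtain ⟨hi, h⟩ := h
  obtain rfl : i = i' := by simp only [opener] at hi; omega
  have hclosed : ∀ {us : List RTree}, (white i us).WellLabeled l →
      ∀ w ∈ us.map (word l), closer l i ∉ w := by
    intro us hl w hw
    obtain ⟨t, ht, rfl⟩ := List.mem_map.1 hw
    exact closer_notMem_word (hl.of_mem_white ht).1 (hl.of_mem_white ht).2
  exact ⟨rfl, List.flatMap_append_singleton_append_inj (by simp [hwf.2.1, hwf'.2.1])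
    (hclosed hl) (hclosed hl') h⟩

theorem leg_word_append_ne_white {j i : ℕ} {us : List RTree} {r r' : List ℕ}
    (hl : (leg j).WellLabeled l) : (leg j).word l ++ r ≠ (white i us).word l ++ r' := by
  intro h
  have := hl.2 j (by simp [legCount])
  simp only [word, List.cons_append, List.nil_append, List.cons.injEq, opener] at h
  omega

theorem word_eq_of_append_eq {t t' : RTree} {r r' : List ℕ} (ht : t.notBlackOrSpecial)
    (ht' : t'.notBlackOrSpecial) (hwf : IsWF n k t) (hwf' : IsWF n k t')
    (hl : t.WellLabeled l) (hl' : t'.WellLabeled l) (h : t.word l ++ r = t'.word l ++ r') :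
    t.word l = t'.word l := by
  cases t with
  | special | black => simp [notBlackOrSpecial] at ht
  | leg j =>
    cases t' with
    | special | black => simp [notBlackOrSpecial] at ht'
    | leg j' =>
      simp only [word, List.cons_append, List.nil_append, List.cons.injEq] at h
      rw [h.1]
    | white => exact absurd h (leg_word_append_ne_white hl)
  | white i us =>
    cases t' with
    | special | black => simp [notBlackOrSpecial] at ht'
    | leg => exact absurd h.symm (leg_word_append_ne_white hl')
    | white i' us' =>
      obtain ⟨rfl, hmap, -⟩ := white_word_append_inj hwf hwf' hl hl' h
      simp only [word, hmap]

/-- The subtrees not rooted at a black vertex whose product is `S`. -/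
def atoms : RTree → List RTree
  | .leg j => [.leg j]
  | .special => []
  | .white i ts => [.white i ts]
  | .black ts => ts

theorem word_eq_flatten_atoms (S : RTree) : S.word l = (S.atoms.map (word l)).flatten := by
  cases S <;> simp [atoms, word]

theorem eq_of_atoms_eq {S T : RTree} (hS : IsWF n k S) (hT : IsWF n k T)
    (h : S.atoms = T.atoms) : S = T := by
  cases S <;> cases T <;> simp only [atoms, List.cons.injEq, reduceCtorEq] at h <;>
    subst_vars <;> simp_all [IsWF]

theorem notBlackOrSpecial_and_isWF_of_mem_atoms {S t : RTree} (hS : IsWF n k S)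
    (ht : t ∈ S.atoms) : t.notBlackOrSpecial ∧ IsWF n k t := by
  cases S with
  | black ts => exact ⟨hS.2.1 t ht, (isWFL_iff ts).1 hS.2.2 t ht⟩
  | special => simp [atoms] at ht
  | _ => simp only [atoms, List.mem_singleton] at ht; subst ht; exact ⟨trivial, hS⟩

theorem WellLabeled.of_mem_atoms {S t : RTree} (hS : S.WellLabeled l) (ht : t ∈ S.atoms) :
    t.WellLabeled l := by
  cases S with
  | black ts => exact hS.of_mem_black ht
  | special => simp [atoms] at ht
  | _ => simp only [atoms, List.mem_singleton] at ht; subst ht; exact hS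

theorem map_word_atoms_eq {S T : RTree} (hS : IsWF n k S) (hT : IsWF n k T)
    (lS : S.WellLabeled l) (lT : T.WellLabeled l) (h : S.word l = T.word l) :
    S.atoms.map (word l) = T.atoms.map (word l) := by
  rw [word_eq_flatten_atoms, word_eq_flatten_atoms] at h
  refine List.eq_of_flatten_eq_of_prefix ?_ ?_ ?_ h
  · simp only [List.mem_map]
    rintro _ ⟨t, ht, rfl⟩
    exact word_ne_nil (notBlackOrSpecial_and_isWF_of_mem_atoms hS ht).1
  · simp only [List.mem_map]
    rintro _ ⟨t, ht, rfl⟩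
    exact word_ne_nil (notBlackOrSpecial_and_isWF_of_mem_atoms hT ht).1
  · simp only [List.mem_map]
    rintro _ ⟨t, ht, rfl⟩ _ ⟨t', ht', rfl⟩ r r' h
    obtain ⟨ha, hwf⟩ := notBlackOrSpecial_and_isWF_of_mem_atoms hS ht
    obtain ⟨ha', hwf'⟩ := notBlackOrSpecial_and_isWF_of_mem_atoms hT ht'
    exact word_eq_of_append_eq ha ha' hwf hwf' (lS.of_mem_atoms ht) (lT.of_mem_atoms ht') h

theorem eq_of_word_eq_of_injOn_atoms {S T : RTree} (hS : IsWF n k S) (hT : IsWF n k T)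
    (lS : S.WellLabeled l) (lT : T.WellLabeled l) (h : S.word l = T.word l)
    (hinj : ∀ a ∈ S.atoms, ∀ b ∈ T.atoms, b.notBlackOrSpecial → IsWF n k b → b.WellLabeled l →
      a.word l = b.word l → a = b) : S = T := by
  refine eq_of_atoms_eq hS hT (List.eq_of_map_eq_map_of_injOn (fun a ha b hb hab => ?_)
    (map_word_atoms_eq hS hT lS lT h))
  obtain ⟨hb', hwfb⟩ := notBlackOrSpecial_and_isWF_of_mem_atoms hT hb
  exact hinj a ha b hb hb' hwfb (lT.of_mem_atoms hb) hab

theorem eq_of_word_eq {S T : RTree} (hS : IsWF n k S) (hT : IsWF n k T)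
    (lS : S.WellLabeled l) (lT : T.WellLabeled l) (h : S.word l = T.word l) : S = T := by
  induction S using induction_mem generalizing T with
  | special => exact eq_of_word_eq_of_injOn_atoms hS hT lS lT h (by simp [atoms])
  | leg j =>
    refine eq_of_word_eq_of_injOn_atoms hS hT lS lT h ?_
    simp only [atoms, List.mem_singleton, forall_eq]
    intro b _ hb _ _ hab
    cases b with
    | special | black => simp [notBlackOrSpecial] at hb
    | leg j' => simpa [word] using hab
    | white => exact absurd (congrArg (· ++ []) hab) (leg_word_append_ne_white lS)
  | white i us ih =>
    refine eq_of_word_eq_of_injOn_atoms hS hT lS lT h ?_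
    simp only [atoms, List.mem_singleton, forall_eq]
    intro b _ hb hwfb lb hab
    cases b with
    | special | black => simp [notBlackOrSpecial] at hb
    | leg => exact absurd (congrArg (· ++ []) hab.symm) (leg_word_append_ne_white lb)
    | white i' us' =>
      obtain ⟨rfl, hmap, -⟩ := white_word_append_inj hS hwfb lS lb (congrArg (· ++ []) hab)
      refine congrArg _ (List.eq_of_map_eq_map_of_injOn (fun u hu u' hu' => ?_) hmap)
      exact ih u hu ((isWFL_iff us).1 hS.2.2 u hu) ((isWFL_iff us').1 hwfb.2.2 u' hu')
        (lS.of_mem_white hu).1 (lb.of_mem_white hu').1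
  | black ts ih =>
    refine eq_of_word_eq_of_injOn_atoms hS hT lS lT h fun a ha b _ _ hwfb lb hab => ?_
    exact ih a ha (notBlackOrSpecial_and_isWF_of_mem_atoms hS ha).2 hwfb (lS.of_mem_atoms ha)
      lb hab

end RTree

open FreeAlgebra

noncomputable def separatingCochain (l : ℕ) (k : ℕ → ℕ) (i : ℕ) :
    MultilinearMap ℤ (fun _ : Fin (k i) => FreeAlgebra ℤ ℕ) (FreeAlgebra ℤ ℕ) :=
  (LinearMap.mulLeft ℤ (ι ℤ (RTree.opener l i))).compMultilinearMap
    ((MultilinearMap.mkPiAlgebraFin ℤ (k i) _).compLinearMap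
      fun _ => LinearMap.mulRight ℤ (ι ℤ (RTree.closer l i)))

theorem separatingCochain_apply (l : ℕ) (k : ℕ → ℕ) (i : ℕ) (a : Fin (k i) → FreeAlgebra ℤ ℕ) :
    separatingCochain l k i a
      = ι ℤ (RTree.opener l i) * (List.ofFn fun s => a s * ι ℤ (RTree.closer l i)).prod :=
  rfl

theorem evalT_separatingCochain {n l : ℕ} {k : ℕ → ℕ} {S : RTree} (hS : IsWF n k S) :
    evalT k (separatingCochain l k) (fun j => ι ℤ j) S = ((S.word l).map (ι ℤ)).prod := by
  induction S using RTree.induction_mem with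
  | leg j => simp [evalT, RTree.word]
  | special => simp [evalT, RTree.word]
  | white i ts ih =>
    have hts := List.map_congr_left fun t ht => ih t ht ((isWFL_iff ts).1 hS.2.2 t ht)
    rw [evalT, evalL_eq_map, hts, separatingCochain_apply,
      List.ofFn_getD_eq_map _ (by simp [hS.2.1]) 1 (· * ι ℤ (RTree.closer l i))]
    simp [RTree.word, List.flatMap_def, List.prod_flatten, Function.comp_def]
  | black ts ih =>
    have hts := List.map_congr_left fun t ht => ih t ht ((isWFL_iff ts).1 hS.2.2 t ht)
    rw [evalT, evalL_eq_map, hts]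
    simp [RTree.word, List.map_flatten, List.prod_flatten, Function.comp_def]

theorem tree_separating_cochains (n l : ℕ) (k : ℕ → ℕ) (T : RTree)
    (hT : IsTree n l k T) :
    ∃ (f : ∀ i : ℕ,
        MultilinearMap ℤ (fun _ : Fin (k i) => FreeAlgebra ℤ ℕ) (FreeAlgebra ℤ ℕ))
      (h : FreeMonoid ℕ),
      ∀ S : RTree, IsTree n l k S →
        ((S = T →
            (FreeAlgebra.basisFreeMonoid ℤ ℕ).repr
              (evalT k f (fun j => FreeAlgebra.ι ℤ j) S) h = 1)
          ∧ (S ≠ T →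
            (FreeAlgebra.basisFreeMonoid ℤ ℕ).repr
              (evalT k f (fun j => FreeAlgebra.ι ℤ j) S) h = 0)) := by
  classical
  refine ⟨separatingCochain l k, FreeMonoid.ofList (T.word l), fun S hS => ?_⟩
  rw [evalT_separatingCochain hS.1, basisFreeMonoid_repr_prod_map_ι, Finsupp.single_apply]
  refine ⟨fun hST => if_pos (by rw [hST]), fun hST => if_neg fun h => hST ?_⟩
  exact RTree.eq_of_word_eq hS.1 hT.1 hS.wellLabeled hT.wellLabeled (FreeMonoid.ofList.injective h)
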